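/- Let p be a probability distribution in non-increasing order with finite Shannon entropy, let m ∈ ℕ, ε ∈ [0,1], d_k = 1 − ∑_{i=1}^k p_i, and suppose ε < d_{m+1}. Let ℓ = min{k : d_k ≤ ε}. Then for every probability distribution q that is m-partially majorized by p and satisfies (1/2)∑_i |p_i − q_i| ≤ ε, one has H(p) − H(q) ≤ Δ + Ŝ(p^{[ℓ−1]}), where Δ = η(p_{m+1}) + η(d_{ℓ−1}) − η(p_{m+1}+ε) − η(d_{ℓ−1}−ε), η(x) = −x ln x, H is Shannon entropy, and Ŝ(p^{[ℓ−1]}) = ∑_{i≥ℓ} η(p_i) − η(d_{ℓ−1}). -/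

import Mathlib

/-!
For `x ∈ [0, 1]`, `x + negMulLog x = ∫₀¹ min x s / s ds`, so the entropy of a distribution `w` is
`∫₀¹ (∑ⱼ min (w j) s) / s ds - 1`, and `∑ⱼ min (w j) s = 1 - ∑ⱼ (w j - s)⁺` is monotone under
majorization. The hypotheses on `q` (partial majorization up to `m`, total variation at most `ε`)
bound the sum of any `k` entries of `q` by the `k`-th partial sum of `moveMass p m (ℓ - 1) ε`,
which is `p` with `ε` added at index `m` and all mass from index `ℓ - 1` on collapsed onto that
index. Hence `H q ≥ H (moveMass p m (ℓ - 1) ε)`, and the latter is computed explicitly.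
-/

open scoped BigOperators

/-- Sum of the `k` largest entries of a nonnegative summable sequence,
defined as the supremum of sums over `k`-element index sets. -/
noncomputable def topSum (p : ℕ → ℝ) (k : ℕ) : ℝ :=
  sSup {s : ℝ | ∃ t : Finset ℕ, t.card = k ∧ s = ∑ i ∈ t, p i}

/-- `p` is a probability distribution on ℕ. -/
def IsDistrib (p : ℕ → ℝ) : Prop :=
  (∀ i, 0 ≤ p i) ∧ Summable p ∧ ∑' i, p i = 1

/-- `p` m-partially majorizes `q`. -/
def PMaj (m : ℕ) (p q : ℕ → ℝ) : Prop :=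
  ∀ k ≤ m, topSum q k ≤ topSum p k

/-- `p` majorizes `q`. -/
def Maj (p q : ℕ → ℝ) : Prop :=
  ∀ k, topSum q k ≤ topSum p k

open Finset Real MeasureTheory

lemma Antitone.sum_le_sum_range {M : Type*} [AddCommMonoid M] [PartialOrder M]
    [IsOrderedAddMonoid M] {f : ℕ → M} (hf : Antitone f) (t : Finset ℕ) :
    ∑ i ∈ t, f i ≤ ∑ i ∈ range #t, f i := by
  induction t using Finset.induction_on_max with
  | empty => simp
  | insert a t hlt ih =>
    have ha : a ∉ t := fun h => lt_irrefl a (hlt a h)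
    have hcard : #t ≤ a := by
      simpa using card_le_card fun x hx => mem_range.2 (hlt x hx)
    rw [sum_insert ha, card_insert_of_notMem ha, sum_range_succ, add_comm]
    exact add_le_add ih (hf hcard)

lemma topSum_eq_sum_range_of_antitone {p : ℕ → ℝ} (hp : Antitone p) (k : ℕ) :
    topSum p k = ∑ i ∈ range k, p i :=
  IsGreatest.csSup_eq ⟨⟨range k, by simp⟩, by
    rintro _ ⟨t, rfl, rfl⟩
    exact hp.sum_le_sum_range t⟩

lemma sum_le_topSum_card {q : ℕ → ℝ} (hq0 : ∀ i, 0 ≤ q i) (hq : Summable q) (t : Finset ℕ) :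
    ∑ i ∈ t, q i ≤ topSum q #t :=
  le_csSup ⟨∑' i, q i, by rintro _ ⟨u, -, rfl⟩; exact hq.sum_le_tsum u fun i _ => hq0 i⟩
    ⟨t, rfl, rfl⟩

namespace IsDistrib

variable {q : ℕ → ℝ}

lemma sum_le_one (hq : IsDistrib q) (t : Finset ℕ) : ∑ i ∈ t, q i ≤ 1 :=
  hq.2.2 ▸ hq.2.1.sum_le_tsum t fun i _ => hq.1 i

lemma le_one (hq : IsDistrib q) (i : ℕ) : q i ≤ 1 := by
  simpa using hq.sum_le_one {i}

lemma summable_max_sub (hq : IsDistrib q) {s : ℝ} (hs : 0 ≤ s) :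
    Summable fun j => max (q j - s) 0 :=
  hq.2.1.of_nonneg_of_le (fun _ => le_max_right _ _)
    fun j => max_le (by linarith) (hq.1 j)

lemma tsum_min_eq (hq : IsDistrib q) {s : ℝ} (hs : 0 ≤ s) :
    ∑' j, min (q j) s = 1 - ∑' j, max (q j - s) 0 := by
  have hmin : ∀ j, min (q j) s = q j - max (q j - s) 0 := fun j => by
    rcases le_total (q j) s with h | h
    · rw [min_eq_left h, max_eq_right (by linarith)]; ring
    · rw [min_eq_right h, max_eq_left (by linarith)]; ring
  rw [tsum_congr hmin, hq.2.1.tsum_sub (hq.summable_max_sub hs), hq.2.2]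

end IsDistrib

lemma lintegral_min_div_eq {x : ℝ} (hx0 : 0 ≤ x) (hx1 : x ≤ 1) :
    ∫⁻ s in Set.Ioc 0 1, ENNReal.ofReal (min x s / s) = ENNReal.ofReal (x + negMulLog x) := by
  rcases hx0.eq_or_lt with rfl | hx0
  · rw [setLIntegral_congr_fun measurableSet_Ioc fun s hs => by rw [min_eq_left hs.1.le]]
    simp
  have below : ∫⁻ s in Set.Ioc 0 x, ENNReal.ofReal (min x s / s) = ENNReal.ofReal x := by
    rw [setLIntegral_congr_fun measurableSet_Ioc fun s hs => by
      rw [min_eq_right hs.2, div_self hs.1.ne', ENNReal.ofReal_one]]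
    simp [Real.volume_Ioc]
  have above : ∫⁻ s in Set.Ioc x 1, ENNReal.ofReal (min x s / s) =
      ENNReal.ofReal (negMulLog x) := by
    rw [setLIntegral_congr_fun measurableSet_Ioc fun s hs => by
      rw [min_eq_left hs.1.le, div_eq_mul_inv]]
    have hint : IntegrableOn (fun s : ℝ => x * s⁻¹) (Set.Ioc x 1) :=
      (ContinuousOn.integrableOn_Icc (continuousOn_const.mul
        (continuousOn_inv₀.mono fun s hs => (hx0.trans_le hs.1).ne'))).mono_set
        Set.Ioc_subset_Icc_self
    rw [← ofReal_integral_eq_lintegral_ofReal hint (ae_restrict_of_forall_mem measurableSet_Ioc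
      fun s hs => (mul_pos hx0 (inv_pos.2 (hx0.trans hs.1))).le),
      ← intervalIntegral.integral_of_le hx1, intervalIntegral.integral_const_mul,
      integral_inv_of_pos hx0 one_pos, one_div, log_inv, negMulLog]
    ring_nf
  rw [← Set.Ioc_union_Ioc_eq_Ioc hx0.le hx1,
    lintegral_union measurableSet_Ioc (Set.Ioc_disjoint_Ioc_of_le le_rfl), below, above,
    ENNReal.ofReal_add hx0.le (negMulLog_nonneg hx0.le hx1)]

lemma lintegral_tsum_min_div_eq {q : ℕ → ℝ} (hq : IsDistrib q)
    (hH : Summable fun i => negMulLog (q i)) :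
    ∫⁻ s in Set.Ioc 0 1, ENNReal.ofReal ((∑' j, min (q j) s) / s) =
      ENNReal.ofReal (1 + ∑' j, negMulLog (q j)) := by
  have hsplit : ∀ s ∈ Set.Ioc (0 : ℝ) 1, ENNReal.ofReal ((∑' j, min (q j) s) / s) =
      ∑' j, ENNReal.ofReal (min (q j) s / s) := fun s hs => by
    have hmin0 : ∀ j, 0 ≤ min (q j) s := fun j => le_min (hq.1 j) hs.1.le
    rw [← tsum_div_const, ENNReal.ofReal_tsum_of_nonneg (fun j => div_nonneg (hmin0 j) hs.1.le)
      ((hq.2.1.of_nonneg_of_le hmin0 fun j => min_le_left _ _).div_const s)]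
  have hnn : ∀ j, 0 ≤ q j + negMulLog (q j) := fun j =>
    add_nonneg (hq.1 j) (negMulLog_nonneg (hq.1 j) (hq.le_one j))
  rw [setLIntegral_congr_fun measurableSet_Ioc hsplit,
    lintegral_tsum fun j => Measurable.aemeasurable (by fun_prop)]
  simp_rw [lintegral_min_div_eq (hq.1 _) (hq.le_one _)]
  rw [← ENNReal.ofReal_tsum_of_nonneg hnn (hq.2.1.add hH), hq.2.1.tsum_add hH, hq.2.2]

lemma tsum_negMulLog_le_of_tsum_min_le {q r : ℕ → ℝ} (hq : IsDistrib q) (hr : IsDistrib r)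
    (hHq : Summable fun i => negMulLog (q i)) (hHr : Summable fun i => negMulLog (r i))
    (hqr : ∀ s ∈ Set.Ioc (0 : ℝ) 1, ∑' j, min (r j) s ≤ ∑' j, min (q j) s) :
    ∑' i, negMulLog (r i) ≤ ∑' i, negMulLog (q i) := by
  have hint := setLIntegral_mono' (μ := volume) measurableSet_Ioc fun s hs =>
    ENNReal.ofReal_le_ofReal (div_le_div_of_nonneg_right (hqr s hs) hs.1.le)
  have hHq0 : 0 ≤ 1 + ∑' i, negMulLog (q i) :=
    add_nonneg zero_le_one (tsum_nonneg fun i => negMulLog_nonneg (hq.1 i) (hq.le_one i))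
  rw [lintegral_tsum_min_div_eq hq hHq, lintegral_tsum_min_div_eq hr hHr,
    ENNReal.ofReal_le_ofReal_iff hHq0] at hint
  linarith

lemma tsum_max_sub_le_of_sum_le_sum_range {q r : ℕ → ℝ} {s : ℝ}
    (hr : Summable fun i => max (r i - s) 0)
    (hqr : ∀ t : Finset ℕ, ∑ j ∈ t, q j ≤ ∑ i ∈ range #t, r i) :
    ∑' j, max (q j - s) 0 ≤ ∑' i, max (r i - s) 0 := by
  refine tsum_le_of_sum_le' (tsum_nonneg fun _ => le_max_right _ _) fun t => ?_
  set u := t.filter fun j => s < q j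
  calc ∑ j ∈ t, max (q j - s) 0 = ∑ j ∈ u, (q j - s) := by
        rw [sum_filter]
        refine sum_congr rfl fun j _ => ?_
        split_ifs with h
        · exact max_eq_left (by linarith)
        · exact max_eq_right (by linarith)
    _ ≤ ∑ i ∈ range #u, (r i - s) := by
        simpa only [sum_sub_distrib, sum_const, card_range] using sub_le_sub_right (hqr u) _
    _ ≤ ∑ i ∈ range #u, max (r i - s) 0 := sum_le_sum fun _ _ => le_max_left _ _
    _ ≤ ∑' i, max (r i - s) 0 := hr.sum_le_tsum _ fun _ _ => le_max_right _ _

lemma tsum_negMulLog_le_of_sum_le_sum_range {q r : ℕ → ℝ} (hq : IsDistrib q) (hr : IsDistrib r)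
    (hHq : Summable fun i => negMulLog (q i)) (hHr : Summable fun i => negMulLog (r i))
    (hqr : ∀ t : Finset ℕ, ∑ j ∈ t, q j ≤ ∑ i ∈ range #t, r i) :
    ∑' i, negMulLog (r i) ≤ ∑' i, negMulLog (q i) :=
  tsum_negMulLog_le_of_tsum_min_le hq hr hHq hHr fun s hs => by
    rw [hq.tsum_min_eq hs.1.le, hr.tsum_min_eq hs.1.le]
    linarith [tsum_max_sub_le_of_sum_le_sum_range (hr.summable_max_sub hs.1.le) hqr]

lemma sum_sub_le_half_tsum_abs_sub {p q : ℕ → ℝ} (hp : Summable p) (hq : Summable q)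
    (hpq : ∑' i, p i = ∑' i, q i) (t : Finset ℕ) :
    ∑ i ∈ t, (q i - p i) ≤ (1 / 2) * ∑' i, |p i - q i| := by
  have hd : Summable fun i => q i - p i := hq.sub hp
  calc ∑ i ∈ t, (q i - p i) ≤ ∑ i ∈ t, (|q i - p i| + (q i - p i)) / 2 :=
        sum_le_sum fun i _ => by linarith [le_abs_self (q i - p i)]
    _ ≤ ∑' i, (|q i - p i| + (q i - p i)) / 2 :=
        ((hd.abs.add hd).div_const 2).sum_le_tsum t fun i _ => by
          linarith [neg_abs_le (q i - p i)]
    _ = (1 / 2) * ∑' i, |p i - q i| := by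
        rw [tsum_div_const, hd.abs.tsum_add hd, hq.tsum_sub hp, ← hpq]
        simp only [abs_sub_comm (q _)]
        ring

noncomputable def moveMass (p : ℕ → ℝ) (m n : ℕ) (ε : ℝ) (i : ℕ) : ℝ :=
  if i < n then p i + (if i = m then ε else 0)
  else if i = n then 1 - ∑ j ∈ range n, p j - ε else 0

namespace moveMass

variable {p : ℕ → ℝ} {m n : ℕ} {ε : ℝ}

lemma eq_zero_of_lt {i : ℕ} (hi : n < i) : moveMass p m n ε i = 0 := by
  simp [moveMass, hi.not_gt, hi.ne']

lemma sum_range_of_le {k : ℕ} (hk : k ≤ n) :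
    ∑ i ∈ range k, moveMass p m n ε i = ∑ i ∈ range k, p i + if m < k then ε else 0 := by
  rw [sum_congr rfl fun i hi => by
    rw [moveMass, if_pos ((mem_range.1 hi).trans_le hk)], sum_add_distrib, sum_ite_eq']
  simp

lemma sum_range_of_lt (hmn : m < n) {k : ℕ} (hk : n < k) :
    ∑ i ∈ range k, moveMass p m n ε i = 1 := by
  rw [← sum_range_add_sum_Ico _ hk, sum_range_succ, sum_range_of_le le_rfl, if_pos hmn,
    sum_eq_zero fun i hi => eq_zero_of_lt (mem_Ico.1 hi).1]
  simp [moveMass]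

lemma isDistrib (hp : ∀ i, 0 ≤ p i) (hmn : m < n) (hε0 : 0 ≤ ε)
    (hεn : ε ≤ 1 - ∑ i ∈ range n, p i) : IsDistrib (moveMass p m n ε) := by
  have hvanish : ∀ i ∉ range (n + 1), moveMass p m n ε i = 0 := fun i hi =>
    eq_zero_of_lt (by simpa using hi)
  refine ⟨fun i => ?_, summable_of_ne_finset_zero hvanish, ?_⟩
  · unfold moveMass
    split_ifs
    · linarith [hp i]
    · exact add_nonneg (hp i) le_rfl
    · linarith
    · exact le_rfl
  · rw [tsum_eq_sum hvanish, sum_range_of_lt hmn n.lt_succ_self]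

lemma summable_negMulLog : Summable fun i => negMulLog (moveMass p m n ε i) :=
  summable_of_ne_finset_zero (s := range (n + 1)) fun i hi => by
    rw [eq_zero_of_lt (by simpa using hi), negMulLog_zero]

lemma tsum_negMulLog (hmn : m < n) :
    ∑' i, negMulLog (moveMass p m n ε i) = ∑ i ∈ range n, negMulLog (p i)
      + (negMulLog (p m + ε) - negMulLog (p m)) + negMulLog (1 - ∑ i ∈ range n, p i - ε) := by
  rw [tsum_eq_sum (s := range (n + 1)) fun i hi => by
      rw [eq_zero_of_lt (by simpa using hi), negMulLog_zero],
    sum_range_succ]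
  congr 1
  · have hterm : ∀ i ∈ range n, negMulLog (moveMass p m n ε i) = negMulLog (p i) +
        if i = m then negMulLog (p i + ε) - negMulLog (p i) else 0 := fun i hi => by
      rw [moveMass, if_pos (mem_range.1 hi)]
      split_ifs <;> simp
    rw [sum_congr rfl hterm, sum_add_distrib, sum_ite_eq', if_pos (mem_range.2 hmn)]
  · simp [moveMass]

end moveMass

lemma sum_le_sum_range_moveMass {p q : ℕ → ℝ} {m n : ℕ} {ε : ℝ} (hmono : Antitone p)
    (hp : IsDistrib p) (hq : IsDistrib q) (hmn : m < n) (hqmaj : PMaj m p q)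
    (hqtv : (1 / 2) * ∑' i, |p i - q i| ≤ ε) (t : Finset ℕ) :
    ∑ j ∈ t, q j ≤ ∑ i ∈ range #t, moveMass p m n ε i := by
  rcases le_or_gt #t n with htn | htn
  · rw [moveMass.sum_range_of_le htn]
    split_ifs with hmt
    · calc ∑ j ∈ t, q j = ∑ j ∈ t, p j + ∑ j ∈ t, (q j - p j) := by
            rw [← sum_add_distrib]; simp
        _ ≤ ∑ i ∈ range #t, p i + ε := add_le_add (hmono.sum_le_sum_range t)
            ((sum_sub_le_half_tsum_abs_sub hp.2.1 hq.2.1 (hp.2.2.trans hq.2.2.symm) t).trans hqtv)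
    · calc ∑ j ∈ t, q j ≤ topSum q #t := sum_le_topSum_card hq.1 hq.2.1 t
        _ ≤ topSum p #t := hqmaj _ (not_lt.1 hmt)
        _ = ∑ i ∈ range #t, p i + 0 := by rw [topSum_eq_sum_range_of_antitone hmono, add_zero]
  · rw [moveMass.sum_range_of_lt hmn htn]
    exact hq.sum_le_one t

theorem entropy_pmaj_tv_bound_general (p : ℕ → ℝ) (hmono : Antitone p) (hp : IsDistrib p)
    (hH : Summable fun i => Real.negMulLog (p i))
    (m ℓ : ℕ) (ε : ℝ) (hε0 : 0 ≤ ε)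
    (hℓ2 : ∀ k < ℓ, ε < 1 - ∑ i ∈ Finset.range k, p i)
    (hℓm : m + 1 < ℓ)
    (q : ℕ → ℝ) (hq : IsDistrib q)
    (hqs : Summable fun i => Real.negMulLog (q i))
    (hqmaj : PMaj m p q) (hqtv : (1 / 2) * ∑' i, |p i - q i| ≤ ε) :
    (∑' i, Real.negMulLog (p i)) - (∑' i, Real.negMulLog (q i)) ≤
      (Real.negMulLog (p m)
        + Real.negMulLog (1 - ∑ i ∈ Finset.range (ℓ - 1), p i)
        - Real.negMulLog (p m + ε)
        - Real.negMulLog ((1 - ∑ i ∈ Finset.range (ℓ - 1), p i) - ε))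
      + ((∑' i, Real.negMulLog (p (i + (ℓ - 1))))
        - Real.negMulLog (1 - ∑ i ∈ Finset.range (ℓ - 1), p i)) := by
  have hmn : m < ℓ - 1 := by omega
  have hr := moveMass.isDistrib hp.1 hmn hε0 (hℓ2 (ℓ - 1) (by omega)).le
  have hrq := tsum_negMulLog_le_of_sum_le_sum_range hq hr hqs moveMass.summable_negMulLog
    (sum_le_sum_range_moveMass hmono hp hq hmn hqmaj hqtv)
  rw [moveMass.tsum_negMulLog hmn] at hrq
  linarith [hH.sum_add_tsum_nat_add (ℓ - 1)]

theorem entropy_pmaj_tv_bound (p : ℕ → ℝ) (hmono : Antitone p) (hp : IsDistrib p)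
    (hH : Summable fun i => Real.negMulLog (p i))
    (m ℓ : ℕ) (ε : ℝ) (hε0 : 0 ≤ ε) (hε1 : ε ≤ 1)
    (hεd : ε < 1 - ∑ i ∈ Finset.range (m + 1), p i)
    (hℓ1 : 1 - ∑ i ∈ Finset.range ℓ, p i ≤ ε)
    (hℓ2 : ∀ k < ℓ, ε < 1 - ∑ i ∈ Finset.range k, p i)
    (hℓm : m + 1 < ℓ)
    (q : ℕ → ℝ) (hq : IsDistrib q)
    (hqs : Summable fun i => Real.negMulLog (q i))
    (hqmaj : PMaj m p q) (hqtv : (1 / 2) * ∑' i, |p i - q i| ≤ ε) :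
    (∑' i, Real.negMulLog (p i)) - (∑' i, Real.negMulLog (q i)) ≤
      (Real.negMulLog (p m)
        + Real.negMulLog (1 - ∑ i ∈ Finset.range (ℓ - 1), p i)
        - Real.negMulLog (p m + ε)
        - Real.negMulLog ((1 - ∑ i ∈ Finset.range (ℓ - 1), p i) - ε))
      + ((∑' i, Real.negMulLog (p (i + (ℓ - 1))))
        - Real.negMulLog (1 - ∑ i ∈ Finset.range (ℓ - 1), p i)) :=
  entropy_pmaj_tv_bound_general p hmono hp hH m ℓ ε hε0 hℓ2 hℓm q hq hqs hqmaj hqtv
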